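/- arXiv:1707.04479 — 4 statements merged into one kernel-verified Lean document; each statement's English description precedes it below -/
import Mathlib

section
/- Let A be a matrix with countable index set and entries in the natural numbers. If A is locally eventually onto (for each index I there is n such that Aⁿ_{IJ} > 0 for all J), then every nonnegative eigenvector of A (with positive eigenvalue λ, satisfying ∑_J A_{IJ} v_J = λ v_I for all I, with the sums converging) is summable, i.e. ∑_J v_J < ∞. -/
/-!
The entries of `Aⁿ` are natural numbers, so each positive one is at least `1`. If the row `i`
of `Aⁿ` is positive, then `∑ⱼ vⱼ ≤ ∑ⱼ Aⁿᵢⱼ vⱼ = λⁿ vᵢ < ∞`.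
-/

open scoped ENNReal

open Classical in
/-- `n`-th power of a countable nonnegative matrix, with entries in `ℝ≥0∞` so that
all sums are defined. -/
noncomputable def matPow {P : Type*} (A : P → P → ℝ≥0∞) : ℕ → P → P → ℝ≥0∞
  | 0, i, j => if i = j then 1 else 0
  | n + 1, i, j => ∑' k, matPow A n i k * A k j

theorem one_le_matPow_natCast_of_pos {P : Type*} (A : P → P → ℕ) (n : ℕ) (i j : P)
    (h : 0 < matPow (fun a b => (A a b : ℝ≥0∞)) n i j) :
    1 ≤ matPow (fun a b => (A a b : ℝ≥0∞)) n i j := by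
  induction n generalizing j with
  | zero =>
    simp only [matPow] at h ⊢
    split_ifs at h ⊢ <;> simp_all
  | succ n ih =>
    simp only [matPow] at h ⊢
    obtain ⟨k, hk⟩ : ∃ k, matPow (fun a b => (A a b : ℝ≥0∞)) n i k * A k j ≠ 0 := by
      simpa [ENNReal.tsum_eq_zero] using h.ne'
    obtain ⟨hpow, hA⟩ := mul_ne_zero_iff.mp hk
    calc (1 : ℝ≥0∞) = 1 * 1 := (one_mul 1).symm
      _ ≤ matPow (fun a b => (A a b : ℝ≥0∞)) n i k * A k j :=
        mul_le_mul' (ih k (pos_iff_ne_zero.mpr hpow))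
          (Nat.one_le_cast.mpr (Nat.pos_of_ne_zero (by exact_mod_cast hA)))
      _ ≤ _ := ENNReal.le_tsum k

theorem tsum_matPow_mul_of_eigenvector {P : Type*} (A : P → P → ℝ≥0∞) (v : P → ℝ≥0∞)
    (lam : ℝ≥0∞) (heig : ∀ i, ∑' j, A i j * v j = lam * v i) (n : ℕ) (i : P) :
    ∑' j, matPow A n i j * v j = lam ^ n * v i := by
  induction n generalizing i with
  | zero =>
    rw [tsum_eq_single i fun j hj => by simp [matPow, Ne.symm hj]]
    simp [matPow]
  | succ n ih =>
    calc ∑' j, matPow A (n + 1) i j * v j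
        = ∑' j, ∑' k, matPow A n i k * (A k j * v j) := by
          simp only [matPow, ← ENNReal.tsum_mul_right, mul_assoc]
      _ = ∑' k, matPow A n i k * ∑' j, A k j * v j := by
          rw [ENNReal.tsum_comm]
          simp only [ENNReal.tsum_mul_left]
      _ = lam * ∑' k, matPow A n i k * v k := by
          simp only [heig, ← ENNReal.tsum_mul_left, mul_left_comm]
      _ = lam ^ (n + 1) * v i := by rw [ih, pow_succ', mul_assoc]

theorem stmt_2_general {P : Type*} (A : P → P → ℕ)
    (hleo : ∀ i, ∃ n, ∀ j, 0 < matPow (fun a b => (A a b : ℝ≥0∞)) n i j)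
    (v : P → NNReal) (lam : NNReal)
    (heig : ∀ i, ∑' j, (A i j : ℝ≥0∞) * (v j : ℝ≥0∞) = (lam : ℝ≥0∞) * (v i : ℝ≥0∞)) :
    Summable v := by
  rcases isEmpty_or_nonempty P with _ | ⟨⟨i⟩⟩
  · exact summable_empty
  obtain ⟨n, hn⟩ := hleo i
  have hle : ∑' j, (v j : ℝ≥0∞) ≤ (lam : ℝ≥0∞) ^ n * v i := by
    rw [← tsum_matPow_mul_of_eigenvector _ _ _ heig n i]
    exact ENNReal.tsum_le_tsum fun j =>
      le_mul_of_one_le_left bot_le (one_le_matPow_natCast_of_pos A n i j (hn j))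
  refine ENNReal.tsum_coe_ne_top_iff_summable.mp (ne_top_of_le_ne_top ?_ hle)
  exact ENNReal.mul_ne_top (ENNReal.pow_ne_top ENNReal.coe_ne_top) ENNReal.coe_ne_top

/-- If a matrix `A` with countable index set and entries in `ℕ` is locally
eventually onto, then every nonnegative eigenvector of `A` (with positive eigenvalue) is
summable. -/
theorem stmt_2 {P : Type*} [Countable P] (A : P → P → ℕ)
    (hleo : ∀ i, ∃ n, ∀ j, 0 < matPow (fun a b => (A a b : ℝ≥0∞)) n i j)
    (v : P → NNReal) (lam : NNReal) (hlam : 0 < lam) (hv : v ≠ 0)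
    (heig : ∀ i, ∑' j, (A i j : ℝ≥0∞) * (v j : ℝ≥0∞) = (lam : ℝ≥0∞) * (v i : ℝ≥0∞)) :
    Summable v :=
  stmt_2_general A hleo v lam heig
end

section
/- A piecewise monotone topologically mixing continuous map f : [0,1] → [0,1] has all periodic orbits repelling: for every periodic orbit P of f there is an open set U ⊇ P such that for all x ∈ U \ P there exists n with fⁿ(x) ∉ U. -/
open Set

abbrev UI := unitInterval

/-- Critical points: the endpoints together with the points near which `f` is not
strictly monotone. -/
def Crit (f : UI → UI) : Set UI :=
  {0, 1} ∪ {x | ∀ U ∈ nhds x, ¬ StrictMonoOn f U ∧ ¬ StrictAntiOn f U}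

/-- Topological mixing. -/
def Mixing (f : UI → UI) : Prop :=
  ∀ U V : Set UI, IsOpen U → IsOpen V → U.Nonempty → V.Nonempty →
    ∃ N, ∀ n ≥ N, (f^[n] '' U ∩ V).Nonempty

/-!
Let `q` have period `M`. Since `f` has finitely many critical points, `f^M` is strictly monotone
on a one-sided neighbourhood of `q` on either side. On a side where `f^M` preserves the order, say
the right, `x < f^M x` for all `x > q` close to `q`: otherwise `[q, x]` would be `f^M`-invariant,
so all its forward images would stay close to the orbit of `q`, which transitivity (implied by
mixing) forbids. An increasing orbit trapped near `q` would converge to a fixed point of `f^M` to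
the right of `q`, so these points escape. A side on which `f^M` reverses the order is sent across
`q` in one step, and if `f^M` reverses both sides then `f^{2M}` preserves both. Finally, take
pairwise disjoint neighbourhoods `V q` of the points of the orbit of `p`, and inside them open
repelling neighbourhoods that `f^n` maps into `V q`: an `f^n`-orbit staying in their union cannot
jump from one to another.
-/

open Filter Topology Function

def StrictMonoOrAntiNear {α β : Type*} [Preorder α] [Preorder β] (f : α → β) (l : Filter α) :
    Prop :=
  ∃ s ∈ l, StrictMonoOn f s ∨ StrictAntiOn f s

lemma StrictMonoOrAntiNear.comp {α β γ : Type*} [Preorder α] [Preorder β] [Preorder γ]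
    {g : β → γ} {f : α → β} {l₁ : Filter α} {l₂ : Filter β} (hg : StrictMonoOrAntiNear g l₂)
    (hf : StrictMonoOrAntiNear f l₁) (hfl : Tendsto f l₁ l₂) :
    StrictMonoOrAntiNear (g ∘ f) l₁ := by
  obtain ⟨t, ht, hgt⟩ := hg
  obtain ⟨s, hs, hfs⟩ := hf
  have hmaps : MapsTo f (s ∩ f ⁻¹' t) t := fun x hx => hx.2
  refine ⟨s ∩ f ⁻¹' t, inter_mem hs (hfl ht), ?_⟩
  rcases hgt with hgt | hgt <;> rcases hfs with hfs | hfs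
  · exact .inl (hgt.comp (hfs.mono inter_subset_left) hmaps)
  · exact .inr (hgt.comp_strictAntiOn (hfs.mono inter_subset_left) hmaps)
  · exact .inr (hgt.comp_strictMonoOn (hfs.mono inter_subset_left) hmaps)
  · exact .inl (hgt.comp (hfs.mono inter_subset_left) hmaps)

lemma tendsto_nhdsWithin_of_mapsTo_inter {Y Z : Type*} [TopologicalSpace Y] [TopologicalSpace Z]
    {f : Y → Z} {a : Y} {s t : Set Y} {t' : Set Z} (hf : ContinuousAt f a) (hs : s ∈ 𝓝[t] a)
    (hmaps : MapsTo f (s ∩ t) t') : Tendsto f (𝓝[t] a) (𝓝[t'] (f a)) :=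
  tendsto_nhdsWithin_iff.2
    ⟨hf.tendsto.mono_left nhdsWithin_le_nhds,
      mem_of_superset (inter_mem hs self_mem_nhdsWithin) hmaps⟩

def TopologicallyTransitive {Y : Type*} [TopologicalSpace Y] (f : Y → Y) : Prop :=
  ∀ U V : Set Y, IsOpen U → IsOpen V → U.Nonempty → V.Nonempty → ∃ n, (f^[n] '' U ∩ V).Nonempty

lemma Mixing.topologicallyTransitive {f : UI → UI} (h : Mixing f) : TopologicallyTransitive f :=
  fun U V hU hV hUne hVne =>
    let ⟨N, hN⟩ := h U V hU hV hUne hVne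
    ⟨N, hN N le_rfl⟩

lemma mapsTo_iterate_of_forall_lt {Y : Type*} {f : Y → Y} {J W : Set Y} {M : ℕ} (hM : 0 < M)
    (hJ : MapsTo f^[M] J J) (hW : ∀ j < M, MapsTo f^[j] J W) (m : ℕ) : MapsTo f^[m] J W := by
  intro t ht
  rw [← Nat.mod_add_div m M, iterate_add_apply, iterate_mul]
  exact hW _ (Nat.mod_lt _ hM) (hJ.iterate _ ht)

def IsRepelling {Y : Type*} [TopologicalSpace Y] (g : Y → Y) (q : Y) : Prop :=
  ∃ N ∈ 𝓝 q, ∀ x, x ≠ q → ∃ k, g^[k] x ∉ N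

lemma IsRepelling.of_iterate {Y : Type*} [TopologicalSpace Y] {g : Y → Y} {q : Y} {n : ℕ}
    (h : IsRepelling g^[n] q) : IsRepelling g q := by
  obtain ⟨N, hN, hesc⟩ := h
  refine ⟨N, hN, fun x hxq => ?_⟩
  obtain ⟨k, hk⟩ := hesc x hxq
  exact ⟨n * k, by rwa [iterate_mul]⟩

section LinearOrder

variable {X : Type*} [LinearOrder X] [TopologicalSpace X] {f g : X → X} {q : X} {s : Set X}

def turningSet (f : X → X) : Set X :=
  {x | ∀ U ∈ 𝓝 x, ¬ StrictMonoOn f U ∧ ¬ StrictAntiOn f U}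

def LocallyPiecewiseStrictMono (f : X → X) : Prop :=
  ∀ q, StrictMonoOrAntiNear f (𝓝[≥] q) ∧ StrictMonoOrAntiNear f (𝓝[≤] q)

lemma MonotoneOn.tendsto_nhdsGE (hg : MonotoneOn g s) (hs : s ∈ 𝓝[≥] q) (hc : ContinuousAt g q) :
    Tendsto g (𝓝[≥] q) (𝓝[≥] (g q)) :=
  tendsto_nhdsWithin_of_mapsTo_inter hc hs fun _ hx =>
    hg (mem_of_mem_nhdsWithin self_mem_Ici hs) hx.1 hx.2

lemma AntitoneOn.tendsto_nhdsGE (hg : AntitoneOn g s) (hs : s ∈ 𝓝[≥] q) (hc : ContinuousAt g q) :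
    Tendsto g (𝓝[≥] q) (𝓝[≤] (g q)) :=
  tendsto_nhdsWithin_of_mapsTo_inter hc hs fun _ hx =>
    hg (mem_of_mem_nhdsWithin self_mem_Ici hs) hx.1 hx.2

lemma MonotoneOn.tendsto_nhdsLE (hg : MonotoneOn g s) (hs : s ∈ 𝓝[≤] q) (hc : ContinuousAt g q) :
    Tendsto g (𝓝[≤] q) (𝓝[≤] (g q)) :=
  tendsto_nhdsWithin_of_mapsTo_inter hc hs fun _ hx =>
    hg hx.1 (mem_of_mem_nhdsWithin self_mem_Iic hs) hx.2

lemma AntitoneOn.tendsto_nhdsLE (hg : AntitoneOn g s) (hs : s ∈ 𝓝[≤] q) (hc : ContinuousAt g q) :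
    Tendsto g (𝓝[≤] q) (𝓝[≥] (g q)) :=
  tendsto_nhdsWithin_of_mapsTo_inter hc hs fun _ hx =>
    hg hx.1 (mem_of_mem_nhdsWithin self_mem_Iic hs) hx.2

lemma locallyPiecewiseStrictMono_id : LocallyPiecewiseStrictMono (id : X → X) :=
  fun _ => ⟨⟨univ, univ_mem, .inl strictMonoOn_id⟩, ⟨univ, univ_mem, .inl strictMonoOn_id⟩⟩

lemma LocallyPiecewiseStrictMono.comp (hf : LocallyPiecewiseStrictMono f)
    (hg : LocallyPiecewiseStrictMono g) (hgc : Continuous g) :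
    LocallyPiecewiseStrictMono (f ∘ g) := by
  intro q
  obtain ⟨⟨s, hs, hgs⟩, ⟨t, ht, hgt⟩⟩ := hg q
  have hc := hgc.continuousAt (x := q)
  constructor
  · rcases hgs with hgs | hgs
    · exact (hf (g q)).1.comp ⟨s, hs, .inl hgs⟩ (hgs.monotoneOn.tendsto_nhdsGE hs hc)
    · exact (hf (g q)).2.comp ⟨s, hs, .inr hgs⟩ (hgs.antitoneOn.tendsto_nhdsGE hs hc)
  · rcases hgt with hgt | hgt
    · exact (hf (g q)).2.comp ⟨t, ht, .inl hgt⟩ (hgt.monotoneOn.tendsto_nhdsLE ht hc)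
    · exact (hf (g q)).1.comp ⟨t, ht, .inr hgt⟩ (hgt.antitoneOn.tendsto_nhdsLE ht hc)

lemma LocallyPiecewiseStrictMono.iterate (hf : LocallyPiecewiseStrictMono f) (hfc : Continuous f) :
    ∀ n, LocallyPiecewiseStrictMono f^[n]
  | 0 => locallyPiecewiseStrictMono_id
  | n + 1 => by rw [iterate_succ]; exact (hf.iterate hfc n).comp hf hfc

def RepelsAbove (g : X → X) (q : X) : Prop :=
  ∃ N ∈ 𝓝 q, ∀ x, q < x → ∃ k, g^[k] x ∉ N

def RepelsBelow (g : X → X) (q : X) : Prop :=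
  ∃ N ∈ 𝓝 q, ∀ x, x < q → ∃ k, g^[k] x ∉ N

lemma RepelsBelow.repelsAbove_of_strictAntiOn (hL : RepelsBelow g q) (hq : g q = q)
    (hs : s ∈ 𝓝[≥] q) (hanti : StrictAntiOn g s) : RepelsAbove g q := by
  obtain ⟨N, hN, hesc⟩ := hL
  have hsq : s ∪ Iio q ∈ 𝓝 q := by
    rw [← nhdsLT_sup_nhdsGE]
    exact ⟨mem_of_superset self_mem_nhdsWithin subset_union_right,
      mem_of_superset hs subset_union_left⟩
  refine ⟨N ∩ (s ∪ Iio q), inter_mem hN hsq, fun x hqx => ?_⟩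
  by_contra! hstay
  have hxs : x ∈ s := ((hstay 0).2.resolve_right hqx.not_gt)
  have hgx : g x < q := hq ▸ hanti (mem_of_mem_nhdsWithin self_mem_Ici hs) hxs hqx
  obtain ⟨k, hk⟩ := hesc (g x) hgx
  exact hk (iterate_succ_apply g k x ▸ (hstay (k + 1)).1)

lemma RepelsAbove.repelsBelow_of_strictAntiOn (hR : RepelsAbove g q) (hq : g q = q)
    (hs : s ∈ 𝓝[≤] q) (hanti : StrictAntiOn g s) : RepelsBelow g q :=
  RepelsBelow.repelsAbove_of_strictAntiOn (X := Xᵒᵈ) hR hq hs hanti.dual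

lemma RepelsAbove.isRepelling (hR : RepelsAbove g q) (hL : RepelsBelow g q) :
    IsRepelling g q := by
  obtain ⟨N₁, hN₁, hesc₁⟩ := hR
  obtain ⟨N₂, hN₂, hesc₂⟩ := hL
  refine ⟨N₁ ∩ N₂, inter_mem hN₁ hN₂, fun x hxq => ?_⟩
  rcases hxq.lt_or_gt with hlt | hgt
  · obtain ⟨k, hk⟩ := hesc₂ x hlt
    exact ⟨k, fun h => hk h.2⟩
  · obtain ⟨k, hk⟩ := hesc₁ x hgt
    exact ⟨k, fun h => hk h.1⟩

end LinearOrder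

section DenselyOrdered

variable {X : Type*} [LinearOrder X] [DenselyOrdered X] [TopologicalSpace X] [OrderTopology X]
  {f : X → X} {q : X} {s : Set X}

lemma IsLocalExtr.mem_turningSet {a b c : X} (hf : IsLocalExtr f c) (hac : a < c) (hcb : c < b) :
    c ∈ turningSet f := by
  have : (𝓝[<] c).NeBot := nhdsLT_neBot_of_exists_lt ⟨a, hac⟩
  have : (𝓝[>] c).NeBot := nhdsGT_neBot_of_exists_gt ⟨b, hcb⟩
  intro U hU
  have hc : c ∈ U := mem_of_mem_nhds hU
  have hU' : ∀ᶠ y in 𝓝 c, y ∈ U := hU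
  rcases hf with hf | hf
  all_goals
    obtain ⟨y₁, ⟨hy₁U, hy₁⟩, hy₁c : y₁ < c⟩ :=
      (((hU'.and hf).filter_mono nhdsWithin_le_nhds).and (self_mem_nhdsWithin (s := Iio c))).exists
    obtain ⟨y₂, ⟨hy₂U, hy₂⟩, hy₂c : c < y₂⟩ :=
      (((hU'.and hf).filter_mono nhdsWithin_le_nhds).and (self_mem_nhdsWithin (s := Ioi c))).exists
  · exact ⟨fun h => (h hy₁U hc hy₁c).not_ge hy₁, fun h => (h hc hy₂U hy₂c).not_ge hy₂⟩
  · exact ⟨fun h => (h hc hy₂U hy₂c).not_ge hy₂, fun h => (h hy₁U hc hy₁c).not_ge hy₁⟩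

lemma TopologicallyTransitive.eventually_lt_iterate (htr : TopologicallyTransitive f)
    (hf : Continuous f) {M : ℕ} (hM : 0 < M) (hq : f^[M] q = q) (hs : s ∈ 𝓝[≥] q)
    (hmono : StrictMonoOn f^[M] s) : ∀ᶠ x in 𝓝[>] q, x < f^[M] x := by
  rcases (Ioi q).eq_empty_or_nonempty with hempty | ⟨y, hy⟩
  · simp [hempty]
  have hQ : ((fun j => f^[j] q) '' Iio M).Finite := (finite_Iio M).image _
  obtain ⟨z, -, hzQ⟩ := ((Ioo_infinite hy).sdiff hQ).nonempty
  obtain ⟨V, W, hV, hW, hzV, hQW, hVW⟩ := SeparatedNhds.of_isCompact_isCompact isCompact_singleton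
    hQ.isCompact (disjoint_singleton_left.2 hzQ)
  have hS : s ∩ ⋂ j ∈ Iio M, f^[j] ⁻¹' W ∈ 𝓝[≥] q :=
    inter_mem hs <| nhdsWithin_le_nhds <| (biInter_mem (finite_Iio M)).2 fun j hj =>
      (hf.iterate j).continuousAt.preimage_mem_nhds (hW.mem_nhds (hQW ⟨j, hj, rfl⟩))
  obtain ⟨u, hqu, hu⟩ := (mem_nhdsGE_iff_exists_Ico_subset' hy).1 hS
  filter_upwards [Ioo_mem_nhdsGT hqu] with x hx
  by_contra! hgx
  have hJS : Icc q x ⊆ s ∩ ⋂ j ∈ Iio M, f^[j] ⁻¹' W := (Icc_subset_Ico_right hx.2).trans hu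
  have hqs : q ∈ s := (hJS (left_mem_Icc.2 hx.1.le)).1
  have hxs : x ∈ s := (hJS (right_mem_Icc.2 hx.1.le)).1
  have hJ : MapsTo f^[M] (Icc q x) (Icc q x) := fun t ht =>
    ⟨hq ▸ hmono.monotoneOn hqs (hJS ht).1 ht.1, (hmono.monotoneOn (hJS ht).1 hxs ht.2).trans hgx⟩
  have hJW := mapsTo_iterate_of_forall_lt hM hJ fun j hj t ht => mem_iInter₂.1 (hJS ht).2 j hj
  obtain ⟨n, _, ⟨t, ht, rfl⟩, hV'⟩ := htr (Ioo q x) V isOpen_Ioo hV (nonempty_Ioo.2 hx.1)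
    ⟨z, hzV rfl⟩
  exact hVW.notMem_of_mem_left hV' (hJW n (Ioo_subset_Icc_self ht))

end DenselyOrdered

lemma exists_lt_iterate_of_lt_apply {X : Type*} [ConditionallyCompleteLinearOrder X]
    [TopologicalSpace X] [OrderTopology X] {g : X → X} (hg : Continuous g) {q b x : X}
    (hgt : ∀ t ∈ Ioc q b, t < g t) (hx : x ∈ Ioc q b) : ∃ k, b < g^[k] x := by
  by_contra! hle
  have hmem : ∀ k, g^[k] x ∈ Ioc q b := by
    intro k
    induction k with
    | zero => exact hx
    | succ k ih =>
      rw [iterate_succ_apply']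
      exact ⟨ih.1.trans (hgt _ ih), iterate_succ_apply' g k x ▸ hle (k + 1)⟩
  have hmono : Monotone fun k => g^[k] x := monotone_nat_of_le_succ fun k => by
    rw [iterate_succ_apply']
    exact (hgt _ (hmem k)).le
  have hbdd : BddAbove (range fun k => g^[k] x) := ⟨b, forall_mem_range.2 hle⟩
  have hL : ⨆ k, g^[k] x ∈ Ioc q b := ⟨hx.1.trans_le (le_ciSup hbdd 0), ciSup_le hle⟩
  exact (hgt _ hL).ne
    (isFixedPt_of_tendsto_iterate (tendsto_atTop_ciSup hmono hbdd) hg.continuousAt).symm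

section ConditionallyComplete

variable {X : Type*} [ConditionallyCompleteLinearOrder X] [DenselyOrdered X] [TopologicalSpace X]
  [OrderTopology X] {f : X → X} {q : X} {s t : Set X}

lemma injOn_Icc_of_disjoint_turningSet {a b : X} (hf : ContinuousOn f (Icc a b))
    (hT : Disjoint (Ioo a b) (turningSet f)) : InjOn f (Icc a b) := by
  intro u hu v hv huv
  by_contra hne
  wlog h : u < v generalizing u v
  · exact this hv hu huv.symm (Ne.symm hne) ((Ne.symm hne).lt_of_le (not_lt.1 h))
  obtain ⟨c, hc, hextr⟩ := exists_isLocalExtr_Ioo h (hf.mono (Icc_subset_Icc hu.1 hv.2)) huv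
  exact hT.notMem_of_mem_left ⟨hu.1.trans_lt hc.1, hc.2.trans_le hv.2⟩
    (hextr.mem_turningSet hc.1 hc.2)

lemma locallyPiecewiseStrictMono_of_finite_turningSet (hf : Continuous f)
    (hT : (turningSet f).Finite) : LocallyPiecewiseStrictMono f := by
  intro q
  have hS : (turningSet f \ {q})ᶜ ∈ 𝓝 q :=
    hT.sdiff.isClosed.isOpen_compl.mem_nhds fun h => h.2 rfl
  obtain ⟨a, b, ⟨haq, hqb⟩, hab, habS⟩ := exists_Icc_mem_subset_of_mem_nhds hS
  have hfree : ∀ x ∈ Icc a b, x ≠ q → x ∉ turningSet f := fun x hx hxq hxT => habS hx ⟨hxT, hxq⟩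
  refine ⟨⟨Icc q b, ?_, ?_⟩, ⟨Icc a q, ?_, ?_⟩⟩
  · exact mem_of_superset (inter_mem_nhdsWithin _ hab) fun x hx => ⟨hx.1, hx.2.2⟩
  · refine hf.continuousOn.strictMonoOn_of_injOn_Icc' hqb
      (injOn_Icc_of_disjoint_turningSet hf.continuousOn (disjoint_left.2 fun x hx => ?_))
    exact hfree x ⟨haq.trans hx.1.le, hx.2.le⟩ hx.1.ne'
  · exact mem_of_superset (inter_mem_nhdsWithin _ hab) fun x hx => ⟨hx.2.1, hx.1⟩
  · refine hf.continuousOn.strictMonoOn_of_injOn_Icc' haq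
      (injOn_Icc_of_disjoint_turningSet hf.continuousOn (disjoint_left.2 fun x hx => ?_))
    exact hfree x ⟨hx.1.le, hx.2.le.trans hqb⟩ hx.2.ne

lemma TopologicallyTransitive.repelsAbove_iterate (htr : TopologicallyTransitive f)
    (hf : Continuous f) {M : ℕ} (hM : 0 < M) (hq : f^[M] q = q) (hs : s ∈ 𝓝[≥] q)
    (hmono : StrictMonoOn f^[M] s) : RepelsAbove f^[M] q := by
  rcases (Ioi q).eq_empty_or_nonempty with hempty | ⟨y, hy⟩
  · exact ⟨univ, univ_mem, fun x hx => (hempty.le hx).elim⟩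
  obtain ⟨u, hqu, hu⟩ := (mem_nhdsGT_iff_exists_Ioo_subset' hy).1
    (htr.eventually_lt_iterate hf hM hq hs hmono)
  obtain ⟨b, hqb, hbu⟩ := exists_between hqu
  refine ⟨Iic b, Iic_mem_nhds hqb, fun x hqx => ?_⟩
  by_cases hxb : x ≤ b
  · obtain ⟨k, hk⟩ := exists_lt_iterate_of_lt_apply (hf.iterate M)
      (fun t ht => hu ⟨ht.1, ht.2.trans_lt hbu⟩) ⟨hqx, hxb⟩
    exact ⟨k, hk.not_ge⟩
  · exact ⟨0, hxb⟩

lemma TopologicallyTransitive.repelsBelow_iterate (htr : TopologicallyTransitive f)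
    (hf : Continuous f) {M : ℕ} (hM : 0 < M) (hq : f^[M] q = q) (hs : s ∈ 𝓝[≤] q)
    (hmono : StrictMonoOn f^[M] s) : RepelsBelow f^[M] q :=
  TopologicallyTransitive.repelsAbove_iterate (X := Xᵒᵈ) htr hf hM hq hs hmono.dual

lemma TopologicallyTransitive.isRepelling_iterate_of_strictAntiOn
    (htr : TopologicallyTransitive f) (hf : Continuous f) {M : ℕ} (hM : 0 < M) (hq : f^[M] q = q)
    (hs : s ∈ 𝓝[≥] q) (hR : StrictAntiOn f^[M] s) (ht : t ∈ 𝓝[≤] q) (hL : StrictAntiOn f^[M] t) :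
    IsRepelling f^[M] q := by
  have hc : ContinuousAt f^[M] q := (hf.iterate M).continuousAt
  have hs' : s ∩ f^[M] ⁻¹' t ∈ 𝓝[≥] q :=
    inter_mem hs (hR.antitoneOn.tendsto_nhdsGE hs hc (by rwa [hq]))
  have ht' : t ∩ f^[M] ⁻¹' s ∈ 𝓝[≤] q :=
    inter_mem ht (hL.antitoneOn.tendsto_nhdsLE ht hc (by rwa [hq]))
  have hR' : StrictMonoOn f^[M + M] (s ∩ f^[M] ⁻¹' t) := by
    rw [iterate_add]
    exact hL.comp (hR.mono inter_subset_left) fun x hx => hx.2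
  have hL' : StrictMonoOn f^[M + M] (t ∩ f^[M] ⁻¹' s) := by
    rw [iterate_add]
    exact hR.comp (hL.mono inter_subset_left) fun x hx => hx.2
  have hq' : f^[M + M] q = q := by rw [iterate_add_apply, hq, hq]
  have hMM : 0 < M + M := by omega
  refine IsRepelling.of_iterate (n := 2) ?_
  rw [← iterate_mul, mul_two]
  exact (htr.repelsAbove_iterate hf hMM hq' hs' hR').isRepelling
    (htr.repelsBelow_iterate hf hMM hq' ht' hL')

theorem TopologicallyTransitive.isRepelling_iterate (htr : TopologicallyTransitive f)
    (hf : Continuous f) (hpm : LocallyPiecewiseStrictMono f) {M : ℕ} (hM : 0 < M)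
    (hq : f^[M] q = q) : IsRepelling f^[M] q := by
  obtain ⟨⟨s, hs, hR⟩, ⟨t, ht, hL⟩⟩ := hpm.iterate hf M q
  rcases hR with hR | hR <;> rcases hL with hL | hL
  · exact (htr.repelsAbove_iterate hf hM hq hs hR).isRepelling
      (htr.repelsBelow_iterate hf hM hq ht hL)
  · have hR' := htr.repelsAbove_iterate hf hM hq hs hR
    exact hR'.isRepelling (hR'.repelsBelow_of_strictAntiOn hq ht hL)
  · have hL' := htr.repelsBelow_iterate hf hM hq ht hL
    exact (hL'.repelsAbove_of_strictAntiOn hq hs hR).isRepelling hL'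
  · exact htr.isRepelling_iterate_of_strictAntiOn hf hM hq hs hR ht hL

end ConditionallyComplete

lemma exists_isOpen_forall_iterate_mem_imp_mem {Y : Type*} [TopologicalSpace Y] [T2Space Y]
    {g : Y → Y} (hg : Continuous g) {P : Set Y} (hP : P.Finite) (hfix : ∀ q ∈ P, g q = q)
    (hrep : ∀ q ∈ P, IsRepelling g q) :
    ∃ U, IsOpen U ∧ P ⊆ U ∧ ∀ x, (∀ k, g^[k] x ∈ U) → x ∈ P := by
  obtain ⟨V, hV, hdisj⟩ := hP.t2_separation
  choose! N hN hesc using hrep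
  set W : Y → Set Y := fun q => interior (N q) ∩ V q ∩ g ⁻¹' V q
  have hqW : ∀ q ∈ P, q ∈ W q := fun q hq =>
    ⟨⟨mem_interior_iff_mem_nhds.2 (hN q hq), (hV q).1⟩,
      by rw [mem_preimage, hfix q hq]; exact (hV q).1⟩
  refine ⟨⋃ q ∈ P, W q,
    isOpen_biUnion fun q _ => (isOpen_interior.inter (hV q).2).inter ((hV q).2.preimage hg),
    fun q hq => mem_biUnion hq (hqW q hq), fun x hx => ?_⟩
  obtain ⟨q, hq, hxq⟩ := mem_iUnion₂.1 (hx 0)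
  have hstay : ∀ k, g^[k] x ∈ W q := by
    intro k
    induction k with
    | zero => exact hxq
    | succ k ih =>
      obtain ⟨q', hq', hk⟩ := mem_iUnion₂.1 (hx (k + 1))
      rw [iterate_succ_apply'] at hk ⊢
      obtain rfl : q' = q := hdisj.elim hq' hq (not_disjoint_iff.2 ⟨_, hk.1.2, ih.2⟩)
      exact hk
  by_contra hxP
  obtain ⟨k, hk⟩ := hesc q hq x fun h => hxP (h ▸ hq)
  exact hk (interior_subset (hstay k).1.1)

/-- A piecewise monotone topologically mixing interval map has all periodic
orbits repelling: for every periodic orbit there is an open set `U` containing the orbit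
such that every point of `U` off the orbit eventually leaves `U`. -/
theorem stmt_6 (f : UI → UI) (hf : Continuous f) (hpm : (Crit f).Finite)
    (hmix : Mixing f) (p : UI) (n : ℕ) (hn : 0 < n) (hper : f^[n] p = p) :
    ∃ U : Set UI, IsOpen U ∧ (∀ k, f^[k] p ∈ U) ∧
      ∀ x ∈ U, x ∉ {y | ∃ k, f^[k] p = y} → ∃ m, f^[m] x ∉ U := by
  have hper' : IsPeriodicPt f n p := hper
  have horbit : {y | ∃ k, f^[k] p = y}.Finite :=
    ((finite_Iio n).image fun k => f^[k] p).subset fun _ ⟨k, hk⟩ =>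
      ⟨k % n, Nat.mod_lt k hn, hk ▸ hper'.iterate_mod_apply k⟩
  have hlpm : LocallyPiecewiseStrictMono f :=
    locallyPiecewiseStrictMono_of_finite_turningSet hf (hpm.subset subset_union_right)
  obtain ⟨U, hU, horbitU, hesc⟩ := exists_isOpen_forall_iterate_mem_imp_mem (hf.iterate n) horbit
    (fun _ ⟨k, hk⟩ => hk ▸ hper'.apply_iterate k)
    (fun _ ⟨k, hk⟩ => hk ▸ hmix.topologicallyTransitive.isRepelling_iterate hf hlpm hn
      (hper'.apply_iterate k))
  refine ⟨U, hU, fun k => horbitU ⟨k, rfl⟩, fun x _ hx => ?_⟩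
  by_contra! hstay
  exact hx (hesc x fun k => iterate_mul f n k ▸ hstay (n * k))
end

section
/- Let f : [0,1] → [0,1] be continuous with a Markov partition P (a countable closed set containing f(Crit(f)) that is invariant: f(P) ⊆ P). Then for each connected component J of [0,1] \ P, the preimage f⁻¹(J) has finitely many connected components, each of which is contained in a single partition interval and is mapped homeomorphically (strictly monotonically) onto J. -/
/-!
All critical values lie in `P` and `f(P) ⊆ P`, so a component `C` of `f⁻¹(J)` lies in the
complement of `P` and contains no critical point. Hence `f` is locally strictly monotone on the
interval `C`; by the topological Rolle theorem it is injective on `C`, hence strictly monotone.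
Then `f(C)` is open, and it is relatively closed in `J` because `closure C ∩ f⁻¹(J) = C` and
`[0,1]` is compact; as `J` is connected, `f(C) = J`. In particular every component meets the
compact fibre over a point of `J`, which is covered by finitely many of the (open) components.
-/

open Set

/-- Slack Markov partition for `f`. -/
def SlackPartition (f : UI → UI) (P : Set UI) : Prop :=
  P.Countable ∧ IsClosed P ∧ MapsTo f P P ∧ f '' Crit f ⊆ P

/-- `J` is a partition interval: a connected component of the complement of `P`. -/
def IsPartInt (P : Set UI) (J : Set UI) : Prop :=
  ∃ x ∈ Pᶜ, J = connectedComponentIn Pᶜ x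

open Filter Topology

theorem StrictMonoOn.not_isLocalExtr {α δ : Type*} [LinearOrder α] [TopologicalSpace α]
    [Preorder δ] {f : α → δ} {U : Set α} {z : α} [(𝓝[<] z).NeBot] [(𝓝[>] z).NeBot]
    (hf : StrictMonoOn f U) (hU : U ∈ 𝓝 z) : ¬IsLocalExtr f z := by
  have hzU : z ∈ U := mem_of_mem_nhds hU
  rintro (hmin | hmax)
  · have h : ∀ᶠ y in 𝓝[<] z, y ∈ U ∧ y < z ∧ f z ≤ f y := Eventually.and
      (nhdsWithin_le_nhds hU) (Eventually.and self_mem_nhdsWithin (nhdsWithin_le_nhds hmin))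
    obtain ⟨y, hyU, hyz, hfy⟩ := h.exists
    exact (hf hyU hzU hyz).not_ge hfy
  · have h : ∀ᶠ y in 𝓝[>] z, y ∈ U ∧ z < y ∧ f y ≤ f z := Eventually.and
      (nhdsWithin_le_nhds hU) (Eventually.and self_mem_nhdsWithin (nhdsWithin_le_nhds hmax))
    obtain ⟨y, hyU, hzy, hfy⟩ := h.exists
    exact (hf hzU hyU hzy).not_ge hfy

theorem StrictAntiOn.not_isLocalExtr {α δ : Type*} [LinearOrder α] [TopologicalSpace α]
    [Preorder δ] {f : α → δ} {U : Set α} {z : α} [(𝓝[<] z).NeBot] [(𝓝[>] z).NeBot]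
    (hf : StrictAntiOn f U) (hU : U ∈ 𝓝 z) : ¬IsLocalExtr f z :=
  fun h => hf.dual_right.not_isLocalExtr hU h.dual

section Order

variable {α δ : Type*} [ConditionallyCompleteLinearOrder α] [DenselyOrdered α]
  [TopologicalSpace α] [OrderTopology α] [LinearOrder δ] [TopologicalSpace δ] [OrderTopology δ]
  {f : α → δ} {s : Set α}

instance OrderTopology.locallyConnectedSpace : LocallyConnectedSpace α :=
  locallyConnectedSpace_iff_connected_subsets.2 fun _ _ hU =>
    ⟨ordConnectedComponent _ _, ordConnectedComponent_mem_nhds.2 hU,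
      OrdConnected.isPreconnected inferInstance, ordConnectedComponent_subset⟩

theorem Set.OrdConnected.injOn_of_locally_strictMonoOn (hs : s.OrdConnected)
    (hf : ContinuousOn f s)
    (hloc : ∀ z ∈ s, ∃ U ∈ 𝓝 z, StrictMonoOn f U ∨ StrictAntiOn f U) : InjOn f s := by
  intro a ha b hb hab
  by_contra hne
  wlog hlt : a < b generalizing a b
  · exact this hb ha hab.symm (Ne.symm hne) ((Ne.symm hne).lt_of_le (not_lt.1 hlt))
  obtain ⟨c, hc, hextr⟩ := exists_isLocalExtr_Ioo hlt (hf.mono (hs.out ha hb)) hab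
  have := nhdsLT_neBot_of_exists_lt ⟨a, hc.1⟩
  have := nhdsGT_neBot_of_exists_gt ⟨b, hc.2⟩
  obtain ⟨U, hU, hmono | hanti⟩ := hloc c (hs.out ha hb (Ioo_subset_Icc_self hc))
  exacts [hmono.not_isLocalExtr hU hextr, hanti.not_isLocalExtr hU hextr]

theorem Set.OrdConnected.strictMonoOn_or_strictAntiOn_of_injOn (hs : s.OrdConnected)
    (hf : ContinuousOn f s) (hi : InjOn f s) : StrictMonoOn f s ∨ StrictAntiOn f s := by
  -- Witnesses of both failures lie in one closed interval inside `s`, where `f` is one of the two.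
  by_contra h
  simp only [not_or, StrictMonoOn, StrictAntiOn, not_forall, not_lt] at h
  obtain ⟨⟨a, ha, b, hb, hab, hba⟩, ⟨c, hc, d, hd, hcd, hcd'⟩⟩ := h
  have hsub : Icc (min a c) (max b d) ⊆ s :=
    hs.out (min_rec' (· ∈ s) ha hc) (max_rec' (· ∈ s) hb hd)
  have hle : min a c ≤ max b d := (min_le_left a c).trans (hab.le.trans (le_max_left b d))
  have ha' : a ∈ Icc (min a c) (max b d) :=
    ⟨min_le_left a c, hab.le.trans (le_max_left b d)⟩
  have hb' : b ∈ Icc (min a c) (max b d) :=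
    ⟨(min_le_left a c).trans hab.le, le_max_left b d⟩
  have hc' : c ∈ Icc (min a c) (max b d) :=
    ⟨min_le_right a c, hcd.le.trans (le_max_right b d)⟩
  have hd' : d ∈ Icc (min a c) (max b d) :=
    ⟨(min_le_right a c).trans hcd.le, le_max_right b d⟩
  rcases ContinuousOn.strictMonoOn_of_injOn_Icc' hle (hf.mono hsub) (hi.mono hsub) with hm | hm
  exacts [(hm ha' hb' hab).not_ge hba, (hm hc' hd' hcd).not_ge hcd']

theorem image_mem_nhds_of_strictMonoOn_or_strictAntiOn {z : α} (hs : s ∈ 𝓝 z)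
    (hl : ∃ l, l < z) (hu : ∃ u, z < u) (hf : ContinuousOn f s)
    (hmono : StrictMonoOn f s ∨ StrictAntiOn f s) : f '' s ∈ 𝓝 (f z) := by
  obtain ⟨l, u, ⟨hlz, hzu⟩, hsub⟩ := (mem_nhds_iff_exists_Ioo_subset' hl hu).1 hs
  obtain ⟨p, hlp, hpz⟩ := exists_between hlz
  obtain ⟨q, hzq, hqu⟩ := exists_between hzu
  have hpq : Icc p q ⊆ s := (Icc_subset_Ioo hlp hqu).trans hsub
  have hp : p ∈ Icc p q := left_mem_Icc.2 (hpz.trans hzq).le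
  have hq : q ∈ Icc p q := right_mem_Icc.2 (hpz.trans hzq).le
  have hz : z ∈ Icc p q := ⟨hpz.le, hzq.le⟩
  refine mem_of_superset ?_ (image_mono (Ioo_subset_Icc_self.trans hpq))
  rcases hmono with hm | hm
  · rw [ContinuousOn.image_Ioo_of_strictMonoOn (hpz.trans hzq).le (hf.mono hpq) (hm.mono hpq)]
    exact Ioo_mem_nhds (hm (hpq hp) (hpq hz) hpz) (hm (hpq hz) (hpq hq) hzq)
  · rw [ContinuousOn.image_Ioo_of_strictAntiOn (hpz.trans hzq).le (hf.mono hpq) (hm.mono hpq)]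
    exact Ioo_mem_nhds (hm (hpq hz) (hpq hq) hzq) (hm (hpq hp) (hpq hz) hpz)

end Order

section Components

variable {X Y : Type*} [TopologicalSpace X] [LocallyConnectedSpace X] {W : Set X}

theorem closure_connectedComponentIn_inter_subset (hW : IsOpen W) (x : X) :
    closure (connectedComponentIn W x) ∩ W ⊆ connectedComponentIn W x := by
  rintro z ⟨hz, hzW⟩
  obtain ⟨w, hwz, hwx⟩ :=
    mem_closure_iff_nhds.1 hz _ (connectedComponentIn_mem_nhds (hW.mem_nhds hzW))
  rw [connectedComponentIn_eq hwx, ← connectedComponentIn_eq hwz]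
  exact mem_connectedComponentIn hzW

theorem finite_connectedComponentIn_of_isCompact {K : Set X} (hW : IsOpen W)
    (hK : IsCompact K) (hKW : K ⊆ W)
    (hmeet : ∀ x ∈ W, (connectedComponentIn W x ∩ K).Nonempty) :
    {C | ∃ x ∈ W, C = connectedComponentIn W x}.Finite := by
  obtain ⟨t, -, hcover⟩ := hK.elim_nhds_subcover (connectedComponentIn W)
    fun z hz => connectedComponentIn_mem_nhds (hW.mem_nhds (hKW hz))
  refine (t.finite_toSet.image (connectedComponentIn W)).subset ?_
  rintro _ ⟨x, hx, rfl⟩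
  obtain ⟨w, hwx, hwK⟩ := hmeet x hx
  obtain ⟨z, hzt, hwz⟩ := mem_iUnion₂.1 (hcover hwK)
  exact ⟨z, hzt, by rw [connectedComponentIn_eq hwz, ← connectedComponentIn_eq hwx]⟩

theorem image_connectedComponentIn_preimage_eq [CompactSpace X] [TopologicalSpace Y]
    [T2Space Y] {f : X → Y} (hf : Continuous f) {J : Set Y} (hJo : IsOpen J)
    (hJc : IsPreconnected J) {x : X} (hx : f x ∈ J)
    (hopen : IsOpen (f '' connectedComponentIn (f ⁻¹' J) x)) :
    f '' connectedComponentIn (f ⁻¹' J) x = J := by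
  refine (image_subset_iff.2 (connectedComponentIn_subset _ _)).antisymm
    (hJc.subset_of_closure_inter_subset hopen
      ⟨f x, hx, mem_image_of_mem f (mem_connectedComponentIn hx)⟩ ?_)
  rw [← image_closure_of_isCompact isClosed_closure.isCompact hf.continuousOn]
  rintro _ ⟨⟨z, hz, rfl⟩, hzJ⟩
  exact mem_image_of_mem f
    (closure_connectedComponentIn_inter_subset (hJo.preimage hf) x ⟨hz, hzJ⟩)

end Components

section UnitInterval

variable {f : UI → UI} {P J : Set UI}

theorem SlackPartition.notMem_crit (hP : SlackPartition f P) {z : UI} (hz : f z ∉ P) :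
    z ∉ Crit f :=
  fun hc => hz (hP.2.2.2 (mem_image_of_mem f hc))

theorem exists_strictMonoOn_or_strictAntiOn_of_notMem_crit {z : UI} (hz : z ∉ Crit f) :
    ∃ U ∈ 𝓝 z, StrictMonoOn f U ∨ StrictAntiOn f U := by
  simp only [Crit, mem_union, mem_ofPred_eq, not_or, not_forall, not_and_or, not_not] at hz
  obtain ⟨-, U, hU, hmono⟩ := hz
  exact ⟨U, hU, hmono⟩

theorem exists_lt_and_exists_gt_of_notMem_crit {z : UI} (hz : z ∉ Crit f) :
    (∃ l, l < z) ∧ ∃ u, z < u := by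
  simp only [Crit, mem_union, mem_insert_iff, mem_singleton_iff, not_or] at hz
  exact ⟨⟨0, unitInterval.nonneg'.lt_of_ne (Ne.symm hz.1.1)⟩,
    ⟨1, unitInterval.le_one'.lt_of_ne hz.1.2⟩⟩

theorem SlackPartition.strictMonoOn_or_strictAntiOn_connectedComponentIn
    (hP : SlackPartition f P) (hf : Continuous f) (hJ : J ⊆ Pᶜ) (x : UI) :
    StrictMonoOn f (connectedComponentIn (f ⁻¹' J) x) ∨
      StrictAntiOn f (connectedComponentIn (f ⁻¹' J) x) := by
  have hC : (connectedComponentIn (f ⁻¹' J) x).OrdConnected :=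
    isPreconnected_connectedComponentIn.ordConnected
  refine hC.strictMonoOn_or_strictAntiOn_of_injOn hf.continuousOn
    (hC.injOn_of_locally_strictMonoOn hf.continuousOn fun z hz => ?_)
  exact exists_strictMonoOn_or_strictAntiOn_of_notMem_crit
    (hP.notMem_crit (hJ (connectedComponentIn_subset (f ⁻¹' J) x hz)))

theorem SlackPartition.isOpen_image_connectedComponentIn (hP : SlackPartition f P)
    (hf : Continuous f) (hJ : J ⊆ Pᶜ) (hJo : IsOpen J) (x : UI) :
    IsOpen (f '' connectedComponentIn (f ⁻¹' J) x) := by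
  refine isOpen_iff_mem_nhds.2 (forall_mem_image.2 fun z hz => ?_)
  obtain ⟨hl, hu⟩ := exists_lt_and_exists_gt_of_notMem_crit
    (hP.notMem_crit (hJ (connectedComponentIn_subset (f ⁻¹' J) x hz)))
  exact image_mem_nhds_of_strictMonoOn_or_strictAntiOn
    ((hJo.preimage hf).connectedComponentIn.mem_nhds hz) hl hu hf.continuousOn
    (hP.strictMonoOn_or_strictAntiOn_connectedComponentIn hf hJ x)

theorem SlackPartition.preimage_subset_compl (hP : SlackPartition f P) (hJ : J ⊆ Pᶜ) :
    f ⁻¹' J ⊆ Pᶜ :=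
  fun _ hz hzP => hJ hz (hP.2.2.1 hzP)

theorem SlackPartition.connectedComponentIn_preimage_subset (hP : SlackPartition f P)
    (hJ : J ⊆ Pᶜ) {x : UI} (hx : x ∈ f ⁻¹' J) :
    connectedComponentIn (f ⁻¹' J) x ⊆ connectedComponentIn Pᶜ x :=
  isPreconnected_connectedComponentIn.subset_connectedComponentIn (mem_connectedComponentIn hx)
    ((connectedComponentIn_subset _ _).trans (hP.preimage_subset_compl hJ))

end UnitInterval

/-- For a continuous map with a Markov partition `P` and a partition
interval `J`, the preimage `f⁻¹(J)` has finitely many connected components, each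
contained in a single partition interval and mapped strictly monotonically onto `J`. -/
theorem stmt_7 (f : UI → UI) (hf : Continuous f) (P : Set UI) (hP : SlackPartition f P)
    (J : Set UI) (hJ : IsPartInt P J) :
    {C | ∃ x ∈ f ⁻¹' J, C = connectedComponentIn (f ⁻¹' J) x}.Finite ∧
    ∀ x ∈ f ⁻¹' J, ∃ K, IsPartInt P K ∧ connectedComponentIn (f ⁻¹' J) x ⊆ K ∧
      (StrictMonoOn f (connectedComponentIn (f ⁻¹' J) x) ∨
        StrictAntiOn f (connectedComponentIn (f ⁻¹' J) x)) ∧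
      f '' connectedComponentIn (f ⁻¹' J) x = J := by
  obtain ⟨x₀, hx₀, hJ⟩ := hJ
  have hJP : J ⊆ Pᶜ := hJ ▸ connectedComponentIn_subset _ _
  have hJo : IsOpen J := hJ ▸ hP.2.1.isOpen_compl.connectedComponentIn
  have hJc : IsPreconnected J := hJ ▸ isPreconnected_connectedComponentIn
  have hx₀J : x₀ ∈ J := hJ ▸ mem_connectedComponentIn hx₀
  have himage : ∀ x ∈ f ⁻¹' J, f '' connectedComponentIn (f ⁻¹' J) x = J := fun x hx =>
    image_connectedComponentIn_preimage_eq hf hJo hJc hx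
      (hP.isOpen_image_connectedComponentIn hf hJP hJo x)
  refine ⟨finite_connectedComponentIn_of_isCompact (hJo.preimage hf)
      ((isClosed_singleton (x := x₀)).preimage hf).isCompact
      (preimage_mono (singleton_subset_iff.2 hx₀J)) fun x hx => ?_, fun x hx => ?_⟩
  · obtain ⟨w, hw, hwx₀⟩ := (himage x hx).symm ▸ hx₀J
    exact ⟨w, hw, hwx₀⟩
  · exact ⟨_, ⟨x, hP.preimage_subset_compl hJP hx, rfl⟩,
      hP.connectedComponentIn_preimage_subset hJP hx,
      hP.strictMonoOn_or_strictAntiOn_connectedComponentIn hf hJP x, himage x hx⟩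
end

section
/- If f : [0,1] → [0,1] is continuous, topologically mixing, and admits a Markov partition P, then the set of accumulation points of P is invariant: f(Acc P) ⊆ Acc P. -/
open Set

/-- The set of accumulation points of `P`. -/
def AccPts (P : Set UI) : Set UI := {x | AccPt x (Filter.principal P)}

/-!
Suppose `x` accumulates on `P` but `f x` does not, so some neighbourhood `V` of `f x` meets `P`
in at most `f x`. Arbitrarily close to `x` there is a point `p ≠ x` of `P`, with the whole interval
between `p` and `x` mapped into `V`; invariance of `P` forces `f p = f x`. Since a mixing map is
nowhere constant, `f` has an interior extremum `z` between `p` and `x` with `f z ≠ f x`. That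
extremum is a critical point, so `f z ∈ P ∩ V`, i.e. `f z = f x`, a contradiction.
-/

open Filter Topology

/-- Since `f^[n + 1] '' U` is a single point, it cannot meet both halves of `[0, 1]`. -/
lemma Mixing.not_eqOn_const {f : UI → UI} (hmix : Mixing f) {U : Set UI} (hU : IsOpen U)
    (hne : U.Nonempty) (c : UI) : ¬ EqOn f (fun _ ↦ c) U := by
  intro hc
  have hlo : IsOpen {y : UI | (y : ℝ) < 1 / 2} := isOpen_lt continuous_subtype_val continuous_const
  have hhi : IsOpen {y : UI | 1 / 2 < (y : ℝ)} := isOpen_lt continuous_const continuous_subtype_val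
  obtain ⟨N₁, h₁⟩ := hmix U _ hU hlo hne ⟨0, by norm_num⟩
  obtain ⟨N₂, h₂⟩ := hmix U _ hU hhi hne ⟨1, by norm_num⟩
  have hconst : ∀ u ∈ U, f^[max N₁ N₂ + 1] u = f^[max N₁ N₂] c := fun u hu ↦ by
    rw [Function.iterate_succ_apply, hc hu]
  obtain ⟨_, ⟨u₁, hu₁, rfl⟩, hv₁⟩ := h₁ (max N₁ N₂ + 1) (by omega)
  obtain ⟨_, ⟨u₂, hu₂, rfl⟩, hv₂⟩ := h₂ (max N₁ N₂ + 1) (by omega)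
  rw [hconst u₁ hu₁] at hv₁
  rw [hconst u₂ hu₂] at hv₂
  exact lt_asymm (α := ℝ) hv₁ hv₂

lemma exists_mem_lt_and_exists_mem_gt {z : UI} (h0 : z ≠ 0) (h1 : z ≠ 1) {s : Set UI}
    (hs : s ∈ 𝓝 z) : (∃ a ∈ s, a < z) ∧ ∃ b ∈ s, z < b := by
  obtain ⟨l, hlz, hl⟩ := exists_Ioc_subset_of_mem_nhds hs ⟨0, unitInterval.pos_iff_ne_zero.2 h0⟩
  obtain ⟨u, hzu, hu⟩ := exists_Ico_subset_of_mem_nhds hs ⟨1, unitInterval.lt_one_iff_ne_one.2 h1⟩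
  obtain ⟨a, hla, haz⟩ := exists_between hlz
  obtain ⟨b, hzb, hbu⟩ := exists_between hzu
  exact ⟨⟨a, hl ⟨hla, haz.le⟩, haz⟩, ⟨b, hu ⟨hzb.le, hbu⟩, hzb⟩⟩

lemma IsLocalExtr.mem_crit {f : UI → UI} {z : UI} (h : IsLocalExtr f z) : z ∈ Crit f := by
  by_cases hz : z = 0 ∨ z = 1
  · exact Or.inl hz
  push Not at hz
  refine Or.inr fun U hU ↦ ?_
  rcases h with hmin | hmax
  · obtain ⟨⟨a, ⟨haU, ha⟩, haz⟩, ⟨b, ⟨hbU, hb⟩, hzb⟩⟩ :=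
      exists_mem_lt_and_exists_mem_gt hz.1 hz.2 (inter_mem hU hmin)
    exact ⟨fun hm ↦ (hm haU (mem_of_mem_nhds hU) haz).not_ge ha,
      fun ha' ↦ (ha' (mem_of_mem_nhds hU) hbU hzb).not_ge hb⟩
  · obtain ⟨⟨a, ⟨haU, ha⟩, haz⟩, ⟨b, ⟨hbU, hb⟩, hzb⟩⟩ :=
      exists_mem_lt_and_exists_mem_gt hz.1 hz.2 (inter_mem hU hmax)
    exact ⟨fun hm ↦ (hm (mem_of_mem_nhds hU) hbU hzb).not_ge hb,
      fun ha' ↦ (ha' haU (mem_of_mem_nhds hU) haz).not_ge ha⟩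

/-- Mixing rules out `f` being constant between `p` and `q`, so an extremum of `f` on that
interval takes a value other than `f p` and is attained strictly inside. -/
lemma exists_mem_crit_ne_of_apply_eq {f : UI → UI} (hf : Continuous f) (hmix : Mixing f)
    {p q : UI} (hpq : p ≠ q) (hfpq : f p = f q) :
    ∃ z ∈ uIcc p q, z ∈ Crit f ∧ f z ≠ f p := by
  wlog hlt : p < q generalizing p q
  · obtain ⟨z, hz, hzc, hne⟩ := this hpq.symm hfpq.symm (hpq.lt_or_gt.resolve_left hlt)
    exact ⟨z, uIcc_comm p q ▸ hz, hzc, hfpq ▸ hne⟩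
  rw [uIcc_of_le hlt.le]
  obtain ⟨w, hw, hwp⟩ : ∃ w ∈ Ioo p q, f w ≠ f p := by
    by_contra! h
    exact hmix.not_eqOn_const isOpen_Ioo (nonempty_Ioo.2 hlt) (f p) h
  have hcpt : IsCompact (Icc p q) := isCompact_Icc
  have hne : (Icc p q).Nonempty := nonempty_Icc.2 hlt.le
  obtain ⟨z, hz, hzne, hext⟩ : ∃ z ∈ Icc p q, f z ≠ f p ∧ IsExtrOn f (Icc p q) z := by
    rcases hwp.lt_or_gt with hlt' | hgt
    · obtain ⟨z, hz, hmin⟩ := hcpt.exists_isMinOn hne hf.continuousOn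
      exact ⟨z, hz, ((hmin (Ioo_subset_Icc_self hw)).trans_lt hlt').ne, Or.inl hmin⟩
    · obtain ⟨z, hz, hmax⟩ := hcpt.exists_isMaxOn hne hf.continuousOn
      exact ⟨z, hz, (hgt.trans_le (hmax (Ioo_subset_Icc_self hw))).ne', Or.inr hmax⟩
  have hzp : z ≠ p := fun h ↦ hzne (h ▸ rfl)
  have hzq : z ≠ q := fun h ↦ hzne (h ▸ hfpq.symm)
  have hz' : z ∈ Ioo p q := ⟨hz.1.lt_of_ne' hzp, hz.2.lt_of_ne hzq⟩
  exact ⟨z, hz, (hext.isLocalExtr (Icc_mem_nhds hz'.1 hz'.2)).mem_crit, hzne⟩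

/-- For a continuous topologically mixing map with a Markov partition `P`,
the set of accumulation points of `P` is invariant. -/
theorem stmt_10 (f : UI → UI) (hf : Continuous f) (hmix : Mixing f)
    (P : Set UI) (hP : SlackPartition f P) :
    f '' AccPts P ⊆ AccPts P := by
  obtain ⟨-, -, hmaps, hcrit⟩ := hP
  rintro _ ⟨x, hx, rfl⟩
  by_contra hfx
  obtain ⟨V, hV, hVP⟩ : ∃ V ∈ 𝓝 (f x), ∀ y ∈ V ∩ P, y = f x := by
    simpa [AccPts, accPt_iff_nhds] using hfx
  obtain ⟨b, c, hxI, hI, hIV⟩ :=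
    exists_Icc_mem_subset_of_mem_nhds (hf.continuousAt.preimage_mem_nhds hV)
  obtain ⟨p, ⟨hpI, hpP⟩, hpx⟩ := accPt_iff_nhds.1 hx _ hI
  have hP_eq : ∀ y ∈ uIcc p x, f y ∈ P → f y = f x := fun y hy hyP ↦
    hVP _ ⟨hIV (ordConnected_Icc.uIcc_subset hpI hxI hy), hyP⟩
  have hfp : f p = f x := hP_eq p left_mem_uIcc (hmaps hpP)
  obtain ⟨z, hz, hzc, hne⟩ := exists_mem_crit_ne_of_apply_eq hf hmix hpx hfp
  exact hne ((hP_eq z hz (hcrit ⟨z, hzc, rfl⟩)).trans hfp.symm)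
end
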